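/- Let e₀₀⁰, e₀₀¹, e₀₂⁰, e₀₂¹, e₁₁⁰, e₁₁¹, e₁₃⁰, e₁₃¹ ∈ ℂ^d and write p₀₀₀ = ‖e₀₀⁰‖², p₀₀₁ = ‖e₀₀¹‖², p₁₀₀ = ‖e₀₂⁰‖², p₁₀₁ = ‖e₀₂¹‖², p₀₁₀ = ‖e₁₁⁰‖², p₀₁₁ = ‖e₁₁¹‖², p₁₁₀ = ‖e₁₃⁰‖², p₁₁₁ = ‖e₁₃¹‖². Assume the eight values p_{ijk} sum to 2 and p₀₀₀ + p₁₁₁ > 0. Let ρ_BEC be the block-diagonal matrix indexed by (Fin 8) × (Fin d) with diagonal blocks ½|e₀₀⁰⟩⟨e₀₀⁰|, ½|e₀₀¹⟩⟨e₀₀¹|, ½|e₀₂⁰⟩⟨e₀₂⁰|, ½|e₀₂¹⟩⟨e₀₂¹|, ½|e₁₁⁰⟩⟨e₁₁⁰|, ½|e₁₁¹⟩⟨e₁₁¹|, ½|e₁₃⁰⟩⟨e₁₃⁰|, ½|e₁₃¹⟩⟨e₁₃¹|, and let ρ_EC be the block-diagonal matrix indexed by (Fin 4) × (Fin d) with diagonal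 blocks ½(|e₀₀⁰⟩⟨e₀₀⁰| + |e₁₃¹⟩⟨e₁₃¹|), ½(|e₀₂⁰⟩⟨e₀₂⁰| + |e₁₁¹⟩⟨e₁₁¹|), ½(|e₀₀¹⟩⟨e₀₀¹| + |e₁₃⁰⟩⟨e₁₃⁰|), ½(|e₀₂¹⟩⟨e₀₂¹| + |e₁₁⁰⟩⟨e₁₁⁰|). Then S(ρ_BEC) − S(ρ_EC) ≥ H(½p₀₀₀, ½p₀₀₁, ½p₁₀₀, ½p₁₀₁, ½p₀₁₀, ½p₀₁₁, ½p₁₁₀, ½p₁₁₁) − H(½(p₀₀₀+p₁₁₁), ½(p₁₀₀+p₀₁₁), ½(p₀₀₁+p₁₁₀), ½(p₁₀₁+p₀₁₀)) − ½(p₁₀₀ + p₀₁₁ + p₀₀₁ + p₁₁₀ + p₁₀₁ + p₀₁₀) − ½(p₀₀₀+p₁₁₁)·h(λ̃), where λ̃ = ½ + √( (p₀₀₀ − p₁₁₁)² + 4|⟨e₀₀⁰, e₁₃¹⟩|² ) / (2(p₀₀₀ + p₁₁₁)). -/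

import Mathlib

open scoped InnerProductSpace

/-- Shannon entropy (base 2) of a finite tuple of reals. -/
noncomputable def shannonH {n : ℕ} (p : Fin n → ℝ) : ℝ := ∑ i, -(p i * Real.logb 2 (p i))

/-- The binary entropy function `h(p) = -p log₂ p - (1-p) log₂ (1-p)`. -/
noncomputable def binH (p : ℝ) : ℝ := -(p * Real.logb 2 p) - (1 - p) * Real.logb 2 (1 - p)

-- Von Neumann entropy (base 2) of a Hermitian complex matrix, via its eigenvalues
-- counted with multiplicity (and `0` for non-Hermitian matrices).
open scoped Classical in
noncomputable def vnEntropy {k : Type*} [Fintype k] [DecidableEq k] (ρ : Matrix k k ℂ) : ℝ :=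
  if h : ρ.IsHermitian then ∑ i, -(h.eigenvalues i * Real.logb 2 (h.eigenvalues i)) else 0

/-- The block-diagonal matrix indexed by `(Fin n) × (Fin m)` whose `j`-th diagonal block
is `σ j` and whose off-diagonal blocks are zero. -/
def blockDiag' {n m : ℕ} (σ : Fin n → Matrix (Fin m) (Fin m) ℂ) :
    Matrix (Fin n × Fin m) (Fin n × Fin m) ℂ :=
  Matrix.of fun p q => if p.1 = q.1 then σ p.1 p.2 q.2 else 0

/-- The outer product `|x⟩⟨x|` of a vector `x ∈ ℂ^d`: the `d×d` matrix with `(i,j)` entry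
`x i * conj (x j)`. -/
noncomputable def outer {d : ℕ} (x : EuclideanSpace ℂ (Fin d)) : Matrix (Fin d) (Fin d) ℂ :=
  Matrix.of fun i j => x i * (starRingEnd ℂ) (x j)

/-!
Both states are block diagonal, so their entropies are sums of block entropies. A block
`½|x⟩⟨x|` has the single nonzero eigenvalue `‖x‖²/2`, which turns `S(ρ_BEC)` into the first
Shannon entropy. A block `½(|x⟩⟨x| + |y⟩⟨y|)` is `M (½ Mᴴ)` for the matrix `M` with columns
`x, y`, so it has the nonzero spectrum of the `2 × 2` matrix `½ Mᴴ M = ½ gram ![x, y]`. Trace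
and determinant of the latter show that its eigenvalues are `s λ` and `s (1 - λ)` with
`s = (‖x‖² + ‖y‖²)/2` and `λ` as in the statement, and the grouping rule gives the block
entropy `η(s) + s h(λ)`, where `η(t) = -t log₂ t`. Keeping this exactly for the block of
`e₀₀⁰, e₁₃¹` and bounding `h ≤ 1` on the other three blocks gives the inequality.
-/
open Polynomial Real

noncomputable def negMulLog₂ (x : ℝ) : ℝ := -(x * logb 2 x)

lemma negMulLog₂_eq (x : ℝ) : negMulLog₂ x = negMulLog x / log 2 := by
  simp only [negMulLog₂, negMulLog, logb]; ring

lemma binH_eq (p : ℝ) : binH p = negMulLog₂ p + negMulLog₂ (1 - p) := by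
  simp only [binH, negMulLog₂]; ring

lemma binH_le_one (p : ℝ) : binH p ≤ 1 := by
  rw [binH_eq, negMulLog₂_eq, negMulLog₂_eq, ← add_div,
    ← binEntropy_eq_negMulLog_add_negMulLog_one_sub, div_le_one (log_pos one_lt_two)]
  exact binEntropy_le_log_two

lemma negMulLog₂_mul_add_negMulLog₂_mul_one_sub (s l : ℝ) :
    negMulLog₂ (s * l) + negMulLog₂ (s * (1 - l)) = negMulLog₂ s + s * binH l := by
  simp only [binH_eq, negMulLog₂_eq, negMulLog_mul]; ring

lemma negMulLog₂_add_negMulLog₂_of_sub_sq_eq {a b r : ℝ} (ha : 0 ≤ a) (hb : 0 ≤ b) (hr : 0 ≤ r)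
    (h : (a - b) ^ 2 = r ^ 2) :
    negMulLog₂ a + negMulLog₂ b =
      negMulLog₂ (a + b) + (a + b) * binH (1 / 2 + r / (2 * (a + b))) := by
  wlog hba : b ≤ a generalizing a b
  · have := this hb ha (by rw [← h]; ring) (by linarith)
    rwa [add_comm b, add_comm (negMulLog₂ b)] at this
  rcases (add_nonneg ha hb).eq_or_lt with hs | hs
  · obtain ⟨rfl, rfl⟩ : a = 0 ∧ b = 0 := ⟨by linarith, by linarith⟩
    simp [negMulLog₂]
  have hr' : r = a - b := (pow_left_inj₀ hr (sub_nonneg.2 hba) two_ne_zero).1 h.symm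
  have hl : 1 / 2 + r / (2 * (a + b)) = a / (a + b) := by rw [hr']; field_simp; ring
  rw [hl, ← negMulLog₂_mul_add_negMulLog₂_mul_one_sub, mul_div_cancel₀ _ hs.ne',
    show (a + b) * (1 - a / (a + b)) = b by field_simp; ring]

section Spectrum

open Matrix

variable {m n : Type*} [Fintype m] [Fintype n] [DecidableEq m] [DecidableEq n]

noncomputable def charpolyEntropy (A : Matrix n n ℂ) : ℝ :=
  (A.charpoly.roots.map fun z => negMulLog₂ z.re).sum

lemma Matrix.IsHermitian.vnEntropy_eq {A : Matrix n n ℂ} (hA : A.IsHermitian) :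
    vnEntropy A = ∑ i, negMulLog₂ (hA.eigenvalues i) :=
  dif_pos hA

lemma Matrix.IsHermitian.vnEntropy_eq_charpolyEntropy {A : Matrix n n ℂ} (hA : A.IsHermitian) :
    vnEntropy A = charpolyEntropy A := by
  rw [hA.vnEntropy_eq, charpolyEntropy, hA.roots_charpoly_eq_eigenvalues, Multiset.map_map,
    Finset.sum_eq_multiset_sum]
  simp [Function.comp_def]

lemma charpolyEntropy_mul_comm (A : Matrix m n ℂ) (B : Matrix n m ℂ) :
    charpolyEntropy (A * B) = charpolyEntropy (B * A) := by
  -- the two characteristic polynomials differ by powers of `X`, and zero roots contribute nothing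
  have h := congrArg roots (charpoly_mul_comm' A B)
  rw [roots_mul ((monic_X_pow _).mul (charpoly_monic _)).ne_zero,
    roots_mul ((monic_X_pow _).mul (charpoly_monic _)).ne_zero, roots_X_pow, roots_X_pow] at h
  simpa [charpolyEntropy, Multiset.map_nsmul, Multiset.sum_nsmul, negMulLog₂] using
    congrArg (fun s => (s.map fun z => negMulLog₂ z.re).sum) h

lemma charpoly_blockDiagonal {R o : Type*} [CommRing R] [Fintype o] [DecidableEq o]
    (M : o → Matrix n n R) : (blockDiagonal M).charpoly = ∏ k, (M k).charpoly := by
  have : charmatrix (blockDiagonal M) = blockDiagonal fun k => charmatrix (M k) := by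
    refine Matrix.ext fun ⟨i, k⟩ ⟨j, l⟩ => ?_
    by_cases hkl : k = l
    · subst hkl
      by_cases hij : i = j
      · subst hij; simp
      · simp [hij]
    · have hne : (i, k) ≠ (j, l) := fun h => hkl (congrArg Prod.snd h)
      simp [charmatrix_apply_ne _ _ _ hne, blockDiagonal_apply_ne _ _ _ hkl]
  rw [charpoly, this, det_blockDiagonal]
  rfl

end Spectrum

lemma blockDiag'_eq_reindex {k d : ℕ} (σ : Fin k → Matrix (Fin d) (Fin d) ℂ) :
    blockDiag' σ = Matrix.reindex (Equiv.prodComm _ _) (Equiv.prodComm _ _)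
      (Matrix.blockDiagonal σ) := by
  refine Matrix.ext fun ⟨a, b⟩ ⟨c, e⟩ => ?_
  simp [blockDiag', Matrix.blockDiagonal_apply]

lemma vnEntropy_blockDiag' {k d : ℕ} (σ : Fin k → Matrix (Fin d) (Fin d) ℂ)
    (hσ : ∀ j, (σ j).IsHermitian) : vnEntropy (blockDiag' σ) = ∑ j, vnEntropy (σ j) := by
  have hB : (blockDiag' σ).IsHermitian := by
    rw [blockDiag'_eq_reindex, Matrix.reindex_apply]
    exact (Matrix.isHermitian_blockDiagonal_iff.2 hσ).submatrix _
  have hroots : (blockDiag' σ).charpoly.roots =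
      Finset.univ.val.bind fun j => (σ j).charpoly.roots := by
    rw [blockDiag'_eq_reindex, Matrix.charpoly_reindex, charpoly_blockDiagonal,
      roots_prod _ _ (Finset.prod_ne_zero_iff.2 fun j _ => (Matrix.charpoly_monic _).ne_zero)]
  rw [hB.vnEntropy_eq_charpolyEntropy, charpolyEntropy, hroots, Multiset.map_bind,
    Multiset.sum_bind, Finset.sum_eq_multiset_sum]
  simp only [fun j => (hσ j).vnEntropy_eq_charpolyEntropy, charpolyEntropy]

section Gram

open Matrix
open scoped ComplexOrder

variable {E : Type*} [NormedAddCommGroup E] [InnerProductSpace ℂ E]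

lemma vnEntropy_smul_sum_outer {ι : Type*} [Fintype ι] [DecidableEq ι] {d : ℕ} (c : ℝ)
    (v : ι → EuclideanSpace ℂ (Fin d)) :
    vnEntropy ((c : ℂ) • ∑ a, outer (v a)) = vnEntropy ((c : ℂ) • gram ℂ v) := by
  let M : Matrix (Fin d) ι ℂ := of fun i a => v a i
  have houter : ∑ a, outer (v a) = M * Mᴴ := by
    ext i j
    simp [M, outer, mul_apply, Matrix.sum_apply]
  have hgram : gram ℂ v = Mᴴ * M := by
    ext a b
    simp [M, gram_apply, mul_apply, PiLp.inner_apply, mul_comm]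
  have hc : IsSelfAdjoint (c : ℂ) := Complex.conj_ofReal c
  rw [houter, hgram, ((isHermitian_mul_conjTranspose_self M).smul hc).vnEntropy_eq_charpolyEntropy,
    ((isHermitian_conjTranspose_mul_self M).smul hc).vnEntropy_eq_charpolyEntropy,
    ← Matrix.mul_smul, ← Matrix.smul_mul, charpolyEntropy_mul_comm]

lemma vnEntropy_smul_gram_single {c : ℝ} (x : E) :
    vnEntropy ((c : ℂ) • gram ℂ ![x]) = negMulLog₂ (c * ‖x‖ ^ 2) := by
  have hA := (isHermitian_gram ℂ ![x]).smul (Complex.conj_ofReal c)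
  have htr := congrArg Complex.re hA.trace_eq_sum_eigenvalues
  simp [trace_fin_one, gram_apply, ← Complex.ofReal_pow] at htr
  rw [hA.vnEntropy_eq, Fin.sum_univ_one, htr]

lemma vnEntropy_smul_gram_pair {c : ℝ} (hc : 0 ≤ c) (x y : E) :
    vnEntropy ((c : ℂ) • gram ℂ ![x, y]) =
      negMulLog₂ (c * (‖x‖ ^ 2 + ‖y‖ ^ 2)) + c * (‖x‖ ^ 2 + ‖y‖ ^ 2) *
        binH (1 / 2 + √((‖x‖ ^ 2 - ‖y‖ ^ 2) ^ 2 + 4 * ‖⟪x, y⟫_ℂ‖ ^ 2) /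
          (2 * (‖x‖ ^ 2 + ‖y‖ ^ 2))) := by
  have hA : ((c : ℂ) • gram ℂ ![x, y]).PosSemidef :=
    (posSemidef_gram ℂ _).smul (by exact_mod_cast hc)
  set μ := hA.1.eigenvalues
  have htr : μ 0 + μ 1 = c * (‖x‖ ^ 2 + ‖y‖ ^ 2) := by
    have := congrArg Complex.re hA.1.trace_eq_sum_eigenvalues
    simp [trace_fin_two, gram_apply, ← Complex.ofReal_pow] at this
    linarith
  have hdet : μ 0 * μ 1 = c ^ 2 * (‖x‖ ^ 2 * ‖y‖ ^ 2 - ‖⟪x, y⟫_ℂ‖ ^ 2) := by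
    have hxy : ⟪x, y⟫_ℂ * ⟪y, x⟫_ℂ = (‖⟪x, y⟫_ℂ‖ : ℂ) ^ 2 := by
      rw [← inner_conj_symm y x, Complex.mul_conj']
    have hdetC : ((c : ℂ) • gram ℂ ![x, y]).det =
        ((c ^ 2 * (‖x‖ ^ 2 * ‖y‖ ^ 2 - ‖⟪x, y⟫_ℂ‖ ^ 2) : ℝ) : ℂ) := by
      simp only [det_fin_two, Matrix.smul_apply, gram_apply, Matrix.cons_val_zero,
        Matrix.cons_val_one, smul_eq_mul, inner_self_eq_norm_sq_to_K]
      push_cast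
      linear_combination (-(c : ℂ) ^ 2) * hxy
    have := hA.1.det_eq_prod_eigenvalues
    rw [hdetC, Fin.prod_univ_two, ← RCLike.ofReal_mul] at this
    exact RCLike.ofReal_injective this.symm
  have hgap : (μ 0 - μ 1) ^ 2 =
      (c * √((‖x‖ ^ 2 - ‖y‖ ^ 2) ^ 2 + 4 * ‖⟪x, y⟫_ℂ‖ ^ 2)) ^ 2 := by
    rw [mul_pow, sq_sqrt (by positivity)]
    linear_combination (μ 0 + μ 1 + c * (‖x‖ ^ 2 + ‖y‖ ^ 2)) * htr - 4 * hdet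
  rw [hA.1.vnEntropy_eq, Fin.sum_univ_two, negMulLog₂_add_negMulLog₂_of_sub_sq_eq
    (hA.eigenvalues_nonneg 0) (hA.eigenvalues_nonneg 1) (by positivity) hgap, htr]
  rcases eq_or_ne (c * (‖x‖ ^ 2 + ‖y‖ ^ 2)) 0 with h0 | h0
  · simp [h0]
  · rw [mul_left_comm 2 c, mul_div_mul_left _ _ (left_ne_zero_of_mul h0)]

end Gram

section Outer

variable {d : ℕ}

lemma isHermitian_outer (x : EuclideanSpace ℂ (Fin d)) : (outer x).IsHermitian := by
  ext i j
  simp [outer, mul_comm]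

lemma vnEntropy_half_smul_outer (x : EuclideanSpace ℂ (Fin d)) :
    vnEntropy ((1 / 2 : ℂ) • outer x) = negMulLog₂ (‖x‖ ^ 2 / 2) := by
  have := vnEntropy_smul_sum_outer (1 / 2) ![x]
  rw [vnEntropy_smul_gram_single] at this
  simpa [div_eq_inv_mul] using this

lemma vnEntropy_half_smul_outer_add_outer (x y : EuclideanSpace ℂ (Fin d)) :
    vnEntropy ((1 / 2 : ℂ) • (outer x + outer y)) =
      negMulLog₂ ((‖x‖ ^ 2 + ‖y‖ ^ 2) / 2) + (‖x‖ ^ 2 + ‖y‖ ^ 2) / 2 *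
        binH (1 / 2 + √((‖x‖ ^ 2 - ‖y‖ ^ 2) ^ 2 + 4 * ‖⟪x, y⟫_ℂ‖ ^ 2) /
          (2 * (‖x‖ ^ 2 + ‖y‖ ^ 2))) := by
  have := vnEntropy_smul_sum_outer (1 / 2) ![x, y]
  rw [vnEntropy_smul_gram_pair (by norm_num)] at this
  simpa [div_eq_inv_mul] using this

lemma vnEntropy_half_smul_outer_add_outer_le (x y : EuclideanSpace ℂ (Fin d)) :
    vnEntropy ((1 / 2 : ℂ) • (outer x + outer y)) ≤
      negMulLog₂ ((‖x‖ ^ 2 + ‖y‖ ^ 2) / 2) + (‖x‖ ^ 2 + ‖y‖ ^ 2) / 2 := by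
  rw [vnEntropy_half_smul_outer_add_outer]
  gcongr
  exact mul_le_of_le_one_right (by positivity) (binH_le_one _)

end Outer

lemma shannonH_eq_sum_negMulLog₂ {n : ℕ} (p : Fin n → ℝ) :
    shannonH p = ∑ i, negMulLog₂ (p i) :=
  rfl

theorem stmt15_general (d : ℕ) (e000 e001 e020 e021 e110 e111 e130 e131 : EuclideanSpace ℂ (Fin d))
    (p000 p001 p100 p101 p010 p011 p110 p111 : ℝ)
    (hp000 : p000 = ‖e000‖ ^ 2) (hp001 : p001 = ‖e001‖ ^ 2)
    (hp100 : p100 = ‖e020‖ ^ 2) (hp101 : p101 = ‖e021‖ ^ 2)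
    (hp010 : p010 = ‖e110‖ ^ 2) (hp011 : p011 = ‖e111‖ ^ 2)
    (hp110 : p110 = ‖e130‖ ^ 2) (hp111 : p111 = ‖e131‖ ^ 2)
    (ρBEC : Matrix (Fin 8 × Fin d) (Fin 8 × Fin d) ℂ)
    (hρBEC : ρBEC = blockDiag'
      ![(1 / 2 : ℂ) • outer e000, (1 / 2 : ℂ) • outer e001,
        (1 / 2 : ℂ) • outer e020, (1 / 2 : ℂ) • outer e021,
        (1 / 2 : ℂ) • outer e110, (1 / 2 : ℂ) • outer e111,
        (1 / 2 : ℂ) • outer e130, (1 / 2 : ℂ) • outer e131])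
    (ρEC : Matrix (Fin 4 × Fin d) (Fin 4 × Fin d) ℂ)
    (hρEC : ρEC = blockDiag'
      ![(1 / 2 : ℂ) • (outer e000 + outer e131),
        (1 / 2 : ℂ) • (outer e020 + outer e111),
        (1 / 2 : ℂ) • (outer e001 + outer e130),
        (1 / 2 : ℂ) • (outer e021 + outer e110)])
    (lam : ℝ)
    (hlam : lam = 1 / 2 +
      Real.sqrt ((p000 - p111) ^ 2 + 4 * ‖⟪e000, e131⟫_ℂ‖ ^ 2) /
        (2 * (p000 + p111))) :
    vnEntropy ρBEC - vnEntropy ρEC ≥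
      shannonH ![p000 / 2, p001 / 2, p100 / 2, p101 / 2, p010 / 2, p011 / 2, p110 / 2, p111 / 2]
        - shannonH ![(p000 + p111) / 2, (p100 + p011) / 2, (p001 + p110) / 2, (p101 + p010) / 2]
        - 1 / 2 * (p100 + p011 + p001 + p110 + p101 + p010)
        - 1 / 2 * (p000 + p111) * binH lam := by
  subst hρBEC hρEC hlam hp000 hp001 hp100 hp101 hp010 hp011 hp110 hp111
  have hhalf : IsSelfAdjoint (1 / 2 : ℂ) := by simp [IsSelfAdjoint]
  rw [vnEntropy_blockDiag' _ fun j => by fin_cases j <;> exact (isHermitian_outer _).smul hhalf,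
    vnEntropy_blockDiag' _ fun j => by
      fin_cases j <;> exact ((isHermitian_outer _).add (isHermitian_outer _)).smul hhalf]
  simp only [shannonH_eq_sum_negMulLog₂, Fin.sum_univ_succ, Fin.sum_univ_zero,
    Matrix.cons_val_zero, Matrix.cons_val_succ, add_zero, vnEntropy_half_smul_outer]
  rw [vnEntropy_half_smul_outer_add_outer e000 e131]
  linarith [vnEntropy_half_smul_outer_add_outer_le e020 e111,
    vnEntropy_half_smul_outer_add_outer_le e001 e130,
    vnEntropy_half_smul_outer_add_outer_le e021 e110]

theorem stmt15 (d : ℕ) (e000 e001 e020 e021 e110 e111 e130 e131 : EuclideanSpace ℂ (Fin d))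
    (p000 p001 p100 p101 p010 p011 p110 p111 : ℝ)
    (hp000 : p000 = ‖e000‖ ^ 2) (hp001 : p001 = ‖e001‖ ^ 2)
    (hp100 : p100 = ‖e020‖ ^ 2) (hp101 : p101 = ‖e021‖ ^ 2)
    (hp010 : p010 = ‖e110‖ ^ 2) (hp011 : p011 = ‖e111‖ ^ 2)
    (hp110 : p110 = ‖e130‖ ^ 2) (hp111 : p111 = ‖e131‖ ^ 2)
    (hsum : p000 + p001 + p100 + p101 + p010 + p011 + p110 + p111 = 2)
    (hpos : 0 < p000 + p111)
    (ρBEC : Matrix (Fin 8 × Fin d) (Fin 8 × Fin d) ℂ)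
    (hρBEC : ρBEC = blockDiag'
      ![(1 / 2 : ℂ) • outer e000, (1 / 2 : ℂ) • outer e001,
        (1 / 2 : ℂ) • outer e020, (1 / 2 : ℂ) • outer e021,
        (1 / 2 : ℂ) • outer e110, (1 / 2 : ℂ) • outer e111,
        (1 / 2 : ℂ) • outer e130, (1 / 2 : ℂ) • outer e131])
    (ρEC : Matrix (Fin 4 × Fin d) (Fin 4 × Fin d) ℂ)
    (hρEC : ρEC = blockDiag'
      ![(1 / 2 : ℂ) • (outer e000 + outer e131),
        (1 / 2 : ℂ) • (outer e020 + outer e111),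
        (1 / 2 : ℂ) • (outer e001 + outer e130),
        (1 / 2 : ℂ) • (outer e021 + outer e110)])
    (lam : ℝ)
    (hlam : lam = 1 / 2 +
      Real.sqrt ((p000 - p111) ^ 2 + 4 * ‖⟪e000, e131⟫_ℂ‖ ^ 2) /
        (2 * (p000 + p111))) :
    vnEntropy ρBEC - vnEntropy ρEC ≥
      shannonH ![p000 / 2, p001 / 2, p100 / 2, p101 / 2, p010 / 2, p011 / 2, p110 / 2, p111 / 2]
        - shannonH ![(p000 + p111) / 2, (p100 + p011) / 2, (p001 + p110) / 2, (p101 + p010) / 2]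
        - 1 / 2 * (p100 + p011 + p001 + p110 + p101 + p010)
        - 1 / 2 * (p000 + p111) * binH lam :=
  stmt15_general d e000 e001 e020 e021 e110 e111 e130 e131 p000 p001 p100 p101 p010 p011 p110 p111
    hp000 hp001 hp100 hp101 hp010 hp011 hp110 hp111 ρBEC hρBEC ρEC hρEC lam hlam
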